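/- Define the OLC problem: minimize Σ_{i∈N} c_i(d_i) over (d,ω,θ) ∈ ℝ^N×ℝ^N×ℝ^N subject to P^in − (d + Dω) = L_B θ, ω = 0, Ĉ B Cᵀ θ = P̂, and P̲ ≤ B Cᵀ θ ≤ P̄; and the VF-OLC problem: minimize Σ_{i∈N} [c_i(d_i) + D_i ω_i²/2] over (d,ω,φ,P) ∈ ℝ^N×ℝ^N×ℝ^N×ℝ^E subject to P^in − (d + Dω) = CP, P^in − d = L_B φ, Ĉ B Cᵀ φ = P̂, and P̲ ≤ B Cᵀ φ ≤ P̄. Let vectors (d*, ω*, θ*, φ*, P*) satisfy Cᵀθ* = Cᵀφ* and L_B θ* = C P*. Then (d*, ω*, θ*) is an optimal solution of OLC if and only if (d*, ω*, φ*, P*) is an optimal solution of VF-OLC. -/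
import Mathlib


open Matrix BigOperators

noncomputable section

variable {N E K : Type*}

/-- Incidence matrix of a directed graph whose edge `e` goes from `src e` to `tgt e`. -/
def inc [DecidableEq N] (src tgt : E → N) : Matrix N E ℝ :=
  Matrix.of fun i e => if src e = i then (1 : ℝ) else if tgt e = i then -1 else 0

/-- The vector of line flows `B Cᵀ φ`. -/
def BCt (src tgt : E → N) (B : E → ℝ) (φ : N → ℝ) : E → ℝ :=
  fun e => B e * (φ (src e) - φ (tgt e))

variable [Fintype N] [Fintype E] [Fintype K] [DecidableEq N]

/-- Feasibility for OLC: `P^in − (d + Dω) = L_B θ`, `ω = 0`, `Ĉ B Cᵀ θ = P̂`,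
`P̲ ≤ B Cᵀ θ ≤ P̄`. -/
def OLCFeas (src tgt : E → N) (B : E → ℝ) (D : N → ℝ) (Chat : Matrix K E ℝ)
    (Pin : N → ℝ) (Phat : K → ℝ) (Plo Phi : E → ℝ) (d ω θ : N → ℝ) : Prop :=
  (∀ i, Pin i - (d i + D i * ω i) = (inc src tgt).mulVec (BCt src tgt B θ) i) ∧
  (∀ i, ω i = 0) ∧
  (∀ k, Chat.mulVec (BCt src tgt B θ) k = Phat k) ∧
  (∀ e, Plo e ≤ BCt src tgt B θ e ∧ BCt src tgt B θ e ≤ Phi e)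

/-- `(d,ω,θ)` is an optimal solution of OLC: feasible and minimizing `Σ_i c_i(d_i)`. -/
def OLCOpt (src tgt : E → N) (B : E → ℝ) (D : N → ℝ) (Chat : Matrix K E ℝ)
    (Pin : N → ℝ) (Phat : K → ℝ) (Plo Phi : E → ℝ) (c : N → ℝ → ℝ)
    (d ω θ : N → ℝ) : Prop :=
  OLCFeas src tgt B D Chat Pin Phat Plo Phi d ω θ ∧
  ∀ d' ω' θ' : N → ℝ, OLCFeas src tgt B D Chat Pin Phat Plo Phi d' ω' θ' →
    ∑ i, c i (d i) ≤ ∑ i, c i (d' i)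

/-- Feasibility for VF-OLC: `P^in − (d + Dω) = CP`, `P^in − d = L_B φ`,
`Ĉ B Cᵀ φ = P̂`, `P̲ ≤ B Cᵀ φ ≤ P̄`. -/
def VFFeas (src tgt : E → N) (B : E → ℝ) (D : N → ℝ) (Chat : Matrix K E ℝ)
    (Pin : N → ℝ) (Phat : K → ℝ) (Plo Phi : E → ℝ)
    (d ω φ : N → ℝ) (P : E → ℝ) : Prop :=
  (∀ i, Pin i - (d i + D i * ω i) = (inc src tgt).mulVec P i) ∧
  (∀ i, Pin i - d i = (inc src tgt).mulVec (BCt src tgt B φ) i) ∧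
  (∀ k, Chat.mulVec (BCt src tgt B φ) k = Phat k) ∧
  (∀ e, Plo e ≤ BCt src tgt B φ e ∧ BCt src tgt B φ e ≤ Phi e)

/-- `(d,ω,φ,P)` is an optimal solution of VF-OLC: feasible and minimizing
`Σ_i [c_i(d_i) + D_i ω_i²/2]`. -/
def VFOpt (src tgt : E → N) (B : E → ℝ) (D : N → ℝ) (Chat : Matrix K E ℝ)
    (Pin : N → ℝ) (Phat : K → ℝ) (Plo Phi : E → ℝ) (c : N → ℝ → ℝ)
    (d ω φ : N → ℝ) (P : E → ℝ) : Prop :=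
  VFFeas src tgt B D Chat Pin Phat Plo Phi d ω φ P ∧
  ∀ d' ω' φ' : N → ℝ, ∀ P' : E → ℝ,
    VFFeas src tgt B D Chat Pin Phat Plo Phi d' ω' φ' P' →
    ∑ i, (c i (d i) + D i * ω i ^ 2 / 2) ≤ ∑ i, (c i (d' i) + D i * ω' i ^ 2 / 2)

/-- OLC and VF-OLC equivalence: on a connected network with `B > 0`,
`D > 0`, strongly convex `C²` costs, and both problems feasible, if
`Cᵀθ* = Cᵀφ*` and `L_B θ* = C P*`, then `(d*,ω*,θ*)` is optimal for OLC iff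
`(d*,ω*,φ*,P*)` is optimal for VF-OLC. -/
theorem OLC_iff_VFOLC
    (src tgt : E → N) (B : E → ℝ) (D : N → ℝ) (Chat : Matrix K E ℝ)
    (Pin : N → ℝ) (Phat : K → ℝ) (Plo Phi : E → ℝ)
    (c c' c'' : N → ℝ → ℝ) (α : ℝ)
    (hne : ∀ e, src e ≠ tgt e)
    (hconn : ∀ ψ : N → ℝ, (∀ e, ψ (src e) = ψ (tgt e)) → ∀ i j, ψ i = ψ j)
    (hB : ∀ e, 0 < B e) (hD : ∀ i, 0 < D i) (hPlim : ∀ e, Plo e ≤ Phi e)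
    (hc' : ∀ i x, HasDerivAt (c i) (c' i x) x)
    (hc'' : ∀ i x, HasDerivAt (c' i) (c'' i x) x)
    (hc''cont : ∀ i, Continuous (c'' i))
    (hα : 0 < α) (hstrong : ∀ i x, α ≤ c'' i x)
    (hOLCfeas : ∃ d ω θ, OLCFeas src tgt B D Chat Pin Phat Plo Phi d ω θ)
    (hVFfeas : ∃ d ω φ P, VFFeas src tgt B D Chat Pin Phat Plo Phi d ω φ P)
    (dS ωS θS φS : N → ℝ) (PS : E → ℝ)
    (hCt : ∀ e, θS (src e) - θS (tgt e) = φS (src e) - φS (tgt e))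
    (hLB : ∀ i, (inc src tgt).mulVec (BCt src tgt B θS) i = (inc src tgt).mulVec PS i) :
    OLCOpt src tgt B D Chat Pin Phat Plo Phi c dS ωS θS ↔
      VFOpt src tgt B D Chat Pin Phat Plo Phi c dS ωS φS PS := by

  have hBCt : BCt src tgt B θS = BCt src tgt B φS := by
    funext e; simp [BCt, hCt e]
  constructor
  · rintro ⟨⟨h1, h2, h3, h4⟩, hopt⟩
    have hfeas : VFFeas src tgt B D Chat Pin Phat Plo Phi dS ωS φS PS := by
      refine ⟨fun i => by rw [← hLB i]; exact h1 i, ?_, fun k => by rw [← hBCt]; exact h3 k,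
        fun e => by rw [← hBCt]; exact h4 e⟩
      intro i
      have := h1 i
      rw [h2 i, mul_zero, add_zero] at this
      rw [← hBCt]; exact this
    refine ⟨hfeas, ?_⟩
    rintro d' ω' φ' P' ⟨g1, g2, g3, g4⟩
    have hfeas' : OLCFeas src tgt B D Chat Pin Phat Plo Phi d' (fun _ => 0) φ' := by
      refine ⟨fun i => by simpa using g2 i, fun i => rfl, g3, g4⟩
    have hle := hopt d' (fun _ => 0) φ' hfeas'
    calc ∑ i, (c i (dS i) + D i * ωS i ^ 2 / 2) = ∑ i, c i (dS i) := by
          apply Finset.sum_congr rfl; intro i _; rw [h2 i]; ring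
      _ ≤ ∑ i, c i (d' i) := hle
      _ ≤ ∑ i, (c i (d' i) + D i * ω' i ^ 2 / 2) := by
          apply Finset.sum_le_sum; intro i _; nlinarith [(hD i).le, sq_nonneg (ω' i)]
  · rintro ⟨⟨g1, g2, g3, g4⟩, hopt⟩
    have hω : ∀ i, ωS i = 0 := by
      intro i
      have h := g1 i
      rw [← hLB i, hBCt, ← g2 i] at h
      have := hD i
      nlinarith
    have hfeas : OLCFeas src tgt B D Chat Pin Phat Plo Phi dS ωS θS := by
      refine ⟨fun i => by rw [hLB i]; exact g1 i, hω, fun k => by rw [hBCt]; exact g3 k,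
        fun e => by rw [hBCt]; exact g4 e⟩
    refine ⟨hfeas, ?_⟩
    rintro d' ω' θ' ⟨f1, f2, f3, f4⟩
    have hfeas' : VFFeas src tgt B D Chat Pin Phat Plo Phi d' ω' θ' (BCt src tgt B θ') := by
      refine ⟨f1, ?_, f3, f4⟩
      intro i
      have := f1 i
      rw [f2 i, mul_zero, add_zero] at this
      exact this
    have hle := hopt d' ω' θ' (BCt src tgt B θ') hfeas'
    calc ∑ i, c i (dS i) = ∑ i, (c i (dS i) + D i * ωS i ^ 2 / 2) := by
          apply Finset.sum_congr rfl; intro i _; rw [hω i]; ring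
      _ ≤ ∑ i, (c i (d' i) + D i * ω' i ^ 2 / 2) := hle
      _ = ∑ i, c i (d' i) := by
          apply Finset.sum_congr rfl; intro i _; rw [f2 i]; ring


end
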